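/- Goodstein's base-change lemma: for ordinals α, β < ε₀ and a natural number b ≥ 2 with b > C(α) and b > C(β), if α < β then T̂_b(α) < T̂_b(β), where T̂_b(γ) is the natural number obtained by replacing ω by b everywhere in the complete Cantor normal form of γ. -/

import Mathlib

open Ordinal in
noncomputable def eps0 : Ordinal.{0} := sInf {a : Ordinal | Ordinal.omega0 ^ a = a}

open Classical in
/-- The natural number `n` such that `o = n`, for `o < ω` (else `0`). -/
noncomputable def onat (o : Ordinal.{0}) : ℕ :=
  if h : o < Ordinal.omega0 then Classical.choose (Ordinal.lt_omega0.mp h) else 0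

open Classical Ordinal in
/-- `Tb b α` replaces `ω` by `b` everywhere in the complete Cantor normal form of `α`. -/
noncomputable def Tb (b : ℕ) : Ordinal.{0} → ℕ :=
  WellFounded.fix Ordinal.lt_wf fun α IH =>
    ((Ordinal.CNF omega0 α).map
      (fun p => if h : p.1 < α then b ^ (IH p.1 h) * onat p.2 else 0)).sum

open Classical Ordinal in
/-- `Cmax α` is the highest integer coefficient appearing in the complete
Cantor normal form of `α`. -/
noncomputable def Cmax : Ordinal.{0} → ℕ :=
  WellFounded.fix Ordinal.lt_wf fun α IH =>
    ((Ordinal.CNF omega0 α).map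
      (fun p => max (if h : p.1 < α then IH p.1 h else 0) (onat p.2))).foldr max 0

open Ordinal in
/-- `TOrd b n` is the ordinal obtained by replacing the base `b` with `ω`
everywhere in the complete `b`-representation of `n`. -/
noncomputable def TOrd (b : ℕ) : ℕ → Ordinal.{0} := fun n =>
  Nat.strongRecOn n (fun n IH =>
    ((((Nat.digits b n).zipIdx.map Prod.swap)).map
      (fun p => if h : p.1 < n then omega0 ^ (IH p.1 h) * p.2 else 0)).sum)

/-- `Sba a b n` replaces the base `a` by `b` in the complete `a`-representation of `n`. -/
noncomputable def Sba (a b : ℕ) (n : ℕ) : ℕ := Tb b (TOrd a n)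

/-!
Write `α = ω ^ e * c + r` with `r < ω ^ e`, so that `T̂_b(α) = b ^ T̂_b(e) * c + T̂_b(r)`.
Strict monotonicity is proved by induction on the larger ordinal `β = ω ^ e * c + r`.
If `α < ω ^ e * c`, then `T̂_b(α) < b ^ T̂_b(e) * c`: peeling off the head `ω ^ e' * c'` of `α`
gives `T̂_b(α) < b ^ T̂_b(e') * (c' + 1) ≤ b ^ (T̂_b(e') + 1)`, because every coefficient is
below `b`, and `T̂_b(e') < T̂_b(e)` whenever `e' < e`, by the outer induction since `e < β`.
Otherwise `α` has the same head as `β`, and only the tails have to be compared.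
-/

open Ordinal Set

noncomputable def leadCoeff (α : Ordinal.{0}) : ℕ := onat (α / ω ^ log ω α)

noncomputable def cnfTail (α : Ordinal.{0}) : Ordinal.{0} := α % ω ^ log ω α

def admissible (b : ℕ) : Set Ordinal.{0} := {α | α < eps0 ∧ Cmax α < b}

lemma natCast_onat {o : Ordinal.{0}} (h : o < ω) : (onat o : Ordinal) = o := by
  rw [onat, dif_pos h]
  exact (Classical.choose_spec (lt_omega0.mp h)).symm

lemma lt_omega0_opow_self_of_lt_eps0 {α : Ordinal.{0}} (h : α < eps0) : α < ω ^ α := by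
  refine (right_le_opow α one_lt_omega0).lt_of_ne fun hfix => ?_
  exact h.not_ge (csInf_le' (s := {a : Ordinal | ω ^ a = a}) hfix.symm)

lemma log_lt_self_of_lt_eps0 {α : Ordinal.{0}} (h0 : α ≠ 0) (h : α < eps0) : log ω α < α :=
  (lt_opow_iff_log_lt one_lt_omega0 h0).1 (lt_omega0_opow_self_of_lt_eps0 h)

lemma natCast_leadCoeff (α : Ordinal.{0}) : (leadCoeff α : Ordinal) = α / ω ^ log ω α :=
  natCast_onat (div_opow_log_lt α one_lt_omega0)

lemma leadCoeff_pos {α : Ordinal.{0}} (h0 : α ≠ 0) : 0 < leadCoeff α := by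
  have h := div_opow_log_pos ω h0
  rw [← natCast_leadCoeff] at h
  exact_mod_cast h

lemma opow_log_mul_leadCoeff_add_cnfTail (α : Ordinal.{0}) :
    ω ^ log ω α * leadCoeff α + cnfTail α = α := by
  rw [natCast_leadCoeff, cnfTail, div_add_mod]

lemma cnfTail_lt_opow_log (α : Ordinal.{0}) : cnfTail α < ω ^ log ω α :=
  mod_lt α (opow_ne_zero _ omega0_ne_zero)

lemma cnfTail_lt_self {α : Ordinal.{0}} (h0 : α ≠ 0) : cnfTail α < α :=
  mod_opow_log_lt_self ω h0

-- Below `ε₀` the guards `p.1 < α` in the definitions of `Tb` and `Cmax` always hold.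
lemma fst_lt_of_mem_CNF {α : Ordinal.{0}} (hα : α < eps0) {p : Ordinal × Ordinal}
    (hp : p ∈ CNF ω α) : p.1 < α := by
  have h0 : α ≠ 0 := by rintro rfl; simp at hp
  exact (CNF.fst_le_log hp).trans_lt (log_lt_self_of_lt_eps0 h0 hα)

lemma Tb_def (b : ℕ) (α : Ordinal.{0}) :
    Tb b α = ((CNF ω α).map
      (fun p => if _ : p.1 < α then b ^ (Tb b p.1) * onat p.2 else 0)).sum := by
  rw [Tb, WellFounded.fix_eq]

lemma Cmax_def (α : Ordinal.{0}) :
    Cmax α = ((CNF ω α).map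
      (fun p => max (if _ : p.1 < α then Cmax p.1 else 0) (onat p.2))).foldr max 0 := by
  rw [Cmax, WellFounded.fix_eq]

lemma Tb_zero (b : ℕ) : Tb b 0 = 0 := by
  simp [Tb_def]

lemma Tb_eq_of_ne_zero (b : ℕ) {α : Ordinal.{0}} (h0 : α ≠ 0) (hα : α < eps0) :
    Tb b α = b ^ Tb b (log ω α) * leadCoeff α + Tb b (cnfTail α) := by
  have hlt := cnfTail_lt_self h0
  rw [Tb_def, CNF.ne_zero h0, List.map_cons, List.sum_cons,
    dif_pos (log_lt_self_of_lt_eps0 h0 hα), Tb_def b (cnfTail α), leadCoeff, cnfTail]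
  refine congrArg _ (congrArg List.sum (List.map_congr_left fun p hp => ?_))
  have hp' : p.1 < α % ω ^ log ω α := fst_lt_of_mem_CNF (hlt.trans hα) hp
  rw [dif_pos hp', dif_pos (hp'.trans hlt)]

lemma Cmax_eq_of_ne_zero {α : Ordinal.{0}} (h0 : α ≠ 0) (hα : α < eps0) :
    Cmax α = max (max (Cmax (log ω α)) (leadCoeff α)) (Cmax (cnfTail α)) := by
  have hlt := cnfTail_lt_self h0
  rw [Cmax_def, CNF.ne_zero h0, List.map_cons, List.foldr_cons,
    dif_pos (log_lt_self_of_lt_eps0 h0 hα), Cmax_def (cnfTail α), leadCoeff, cnfTail]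
  refine congrArg _ (congrArg (List.foldr max 0) (List.map_congr_left fun p hp => ?_))
  have hp' : p.1 < α % ω ^ log ω α := fst_lt_of_mem_CNF (hlt.trans hα) hp
  rw [dif_pos hp', dif_pos (hp'.trans hlt)]

section admissible

variable {b : ℕ} {α : Ordinal.{0}}

lemma pos_of_mem_admissible (hα : α ∈ admissible b) : 0 < b :=
  (Nat.zero_le _).trans_lt hα.2

lemma log_mem_admissible (h0 : α ≠ 0) (hα : α ∈ admissible b) : log ω α ∈ admissible b := by
  refine ⟨(log_lt_self_of_lt_eps0 h0 hα.1).trans hα.1, ?_⟩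
  have h := hα.2
  rw [Cmax_eq_of_ne_zero h0 hα.1] at h
  omega

lemma leadCoeff_lt_of_mem_admissible (h0 : α ≠ 0) (hα : α ∈ admissible b) : leadCoeff α < b := by
  have h := hα.2
  rw [Cmax_eq_of_ne_zero h0 hα.1] at h
  omega

lemma cnfTail_mem_admissible (h0 : α ≠ 0) (hα : α ∈ admissible b) : cnfTail α ∈ admissible b := by
  refine ⟨(cnfTail_lt_self h0).trans hα.1, ?_⟩
  have h := hα.2
  rw [Cmax_eq_of_ne_zero h0 hα.1] at h
  omega

end admissible

lemma log_eq_and_leadCoeff_eq_of_le {α β : Ordinal.{0}} (hβ0 : β ≠ 0)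
    (hhead : ω ^ log ω β * leadCoeff β ≤ α) (hle : α ≤ β) :
    log ω α = log ω β ∧ leadCoeff α = leadCoeff β := by
  have hc : (0 : Ordinal) < leadCoeff β := by exact_mod_cast leadCoeff_pos hβ0
  have hlog : log ω α = log ω β :=
    (log_mono_right ω hle).antisymm
      (le_log_of_opow_le one_lt_omega0 ((le_mul_left _ hc).trans hhead))
  refine ⟨hlog, Nat.cast_injective (R := Ordinal.{0}) ?_⟩
  simp only [natCast_leadCoeff, hlog] at hhead ⊢
  exact (div_le_left hle _).antisymm ((mul_le_iff_le_div (opow_ne_zero _ omega0_ne_zero)).1 hhead)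

lemma cnfTail_lt_cnfTail {α β : Ordinal.{0}} (hlog : log ω α = log ω β)
    (hcoeff : leadCoeff α = leadCoeff β) (hlt : α < β) : cnfTail α < cnfTail β := by
  rw [← opow_log_mul_leadCoeff_add_cnfTail α, ← opow_log_mul_leadCoeff_add_cnfTail β,
    hlog, hcoeff] at hlt
  exact (add_lt_add_iff_left _).1 hlt

lemma Tb_lt_pow_mul_of_lt_opow_mul {b : ℕ} {e α : Ordinal.{0}} {c : ℕ}
    (he : e ∈ admissible b) (hmono : StrictMonoOn (Tb b) (admissible b ∩ Iic e))
    (hα : α ∈ admissible b) (hlt : α < ω ^ e * c) : Tb b α < b ^ Tb b e * c := by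
  induction α using WellFoundedLT.induction generalizing e c with
  | _ α IH =>
  have hb : 0 < b := pos_of_mem_admissible hα
  have hc : 0 < c := Nat.pos_of_ne_zero fun hc => by simp [hc] at hlt
  rcases eq_or_ne α 0 with rfl | h0
  · rw [Tb_zero]
    positivity
  have hlog : log ω α ≤ e := by
    have hsucc : α < ω ^ Order.succ e := by
      rw [opow_succ]
      exact hlt.trans ((mul_lt_mul_iff_right₀ (opow_pos e omega0_pos)).2 (natCast_lt_omega0 c))
    exact Order.le_of_lt_succ ((lt_opow_iff_log_lt one_lt_omega0 h0).1 hsucc)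
  have hL := log_mem_admissible h0 hα
  have htail : Tb b (cnfTail α) < b ^ Tb b (log ω α) := by
    simpa using IH _ (cnfTail_lt_self h0) hL
      (hmono.mono (inter_subset_inter_right _ (Iic_subset_Iic.2 hlog)))
      (cnfTail_mem_admissible h0 hα) (c := 1) (by simpa using cnfTail_lt_opow_log α)
  have hhead : Tb b α < b ^ Tb b (log ω α) * (leadCoeff α + 1) := by
    rw [Tb_eq_of_ne_zero b h0 hα.1, mul_add_one]
    omega
  rcases hlog.lt_or_eq with hlog | hlog
  · calc Tb b α < b ^ Tb b (log ω α) * (leadCoeff α + 1) := hhead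
      _ ≤ b ^ Tb b (log ω α) * b :=
        Nat.mul_le_mul_left _ (leadCoeff_lt_of_mem_admissible h0 hα)
      _ = b ^ (Tb b (log ω α) + 1) := (pow_succ _ _).symm
      _ ≤ b ^ Tb b e := Nat.pow_le_pow_right hb (hmono ⟨hL, hlog.le⟩ ⟨he, self_mem_Iic⟩ hlog)
      _ ≤ b ^ Tb b e * c := Nat.le_mul_of_pos_right _ hc
  · have hcoeff : leadCoeff α < c := by
      have hhead_le : ω ^ e * leadCoeff α ≤ α :=
        hlog ▸ le_self_add.trans_eq (opow_log_mul_leadCoeff_add_cnfTail α)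
      exact_mod_cast (mul_lt_mul_iff_right₀ (opow_pos e omega0_pos)).1 (hhead_le.trans_lt hlt)
    rw [hlog] at hhead
    exact hhead.trans_le (Nat.mul_le_mul_left _ hcoeff)

theorem Tb_strictMonoOn_admissible (b : ℕ) : StrictMonoOn (Tb b) (admissible b) := by
  intro α hα β hβ hlt
  induction β using WellFoundedLT.induction generalizing α with
  | _ β IH =>
  have hβ0 : β ≠ 0 := hlt.ne_bot
  have hmono : StrictMonoOn (Tb b) (admissible b ∩ Iic (log ω β)) :=
    fun x hx y hy hxy => IH y (hy.2.trans_lt (log_lt_self_of_lt_eps0 hβ0 hβ.1)) hx.1 hy.1 hxy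
  have hhead : b ^ Tb b (log ω β) * leadCoeff β ≤ Tb b β :=
    (Tb_eq_of_ne_zero b hβ0 hβ.1).ge.trans' le_self_add
  by_cases hsmall : α < ω ^ log ω β * leadCoeff β
  · exact (Tb_lt_pow_mul_of_lt_opow_mul (log_mem_admissible hβ0 hβ) hmono hα hsmall).trans_le
      hhead
  obtain ⟨hlog, hcoeff⟩ := log_eq_and_leadCoeff_eq_of_le hβ0 (not_lt.1 hsmall) hlt.le
  have hα0 : α ≠ 0 := by
    rintro rfl
    exact hsmall (mul_pos (opow_pos _ omega0_pos) (by exact_mod_cast leadCoeff_pos hβ0))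
  rw [Tb_eq_of_ne_zero b hα0 hα.1, Tb_eq_of_ne_zero b hβ0 hβ.1, hlog, hcoeff]
  exact Nat.add_lt_add_left (IH _ (cnfTail_lt_self hβ0) (cnfTail_mem_admissible hα0 hα)
    (cnfTail_mem_admissible hβ0 hβ) (cnfTail_lt_cnfTail hlog hcoeff hlt)) _

theorem base_change_strict_mono_general (α β : Ordinal.{0}) (hβ : β < eps0)
    (b : ℕ) (hCα : Cmax α < b) (hCβ : Cmax β < b) (h : α < β) :
    Tb b α < Tb b β :=
  Tb_strictMonoOn_admissible b ⟨h.trans hβ, hCα⟩ ⟨hβ, hCβ⟩ h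

/-- Goodstein's base-change lemma: for ordinals `α, β < ε₀` and `b ≥ 2` with
`b > C(α)` and `b > C(β)`, if `α < β` then `T̂_b(α) < T̂_b(β)`. -/
theorem base_change_strict_mono (α β : Ordinal.{0}) (hα : α < eps0) (hβ : β < eps0)
    (b : ℕ) (hb : 2 ≤ b) (hCα : Cmax α < b) (hCβ : Cmax β < b) (h : α < β) :
    Tb b α < Tb b β :=
  base_change_strict_mono_general α β hβ b hCα hCβ h
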